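/- In the definition of the generalized Wasserstein distance, the infimum is unchanged when restricted to pairs of submeasures of μ and ν: W^{a,b}_p(μ,ν) = inf { a|μ−μ̃| + a|ν−ν̃| + b W_p(μ̃,ν̃) : μ̃, ν̃ ∈ M^p, |μ̃| = |ν̃|, μ̃ ≤ μ, ν̃ ≤ ν }, where μ̃ ≤ μ means μ̃(A) ≤ μ(A) for every Borel set A. -/

import Mathlib

open MeasureTheory ENNReal Filter Topology

noncomputable section

/-- `ℝ^d` as a Euclidean space. -/
abbrev Euc (d : ℕ) := EuclideanSpace ℝ (Fin d)

variable {E : Type*} [NormedAddCommGroup E] [MeasurableSpace E]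

/-- Total mass `|μ| = μ(ℝ^d)` of a nonnegative measure, as a real number. -/
def mass (μ : Measure E) : ℝ := (μ Set.univ).toReal

/-- Total variation norm `|μ - ν|` of the difference of two nonnegative finite
measures, computed via the Jordan decomposition `(μ - ν) + (ν - μ)`. -/
def tvDist (μ ν : Measure E) : ℝ := ((μ - ν) Set.univ + (ν - μ) Set.univ).toReal

/-- `μ` has finite `p`-th moment. -/
def FinMom (p : ℝ) (μ : Measure E) : Prop :=
  ∫⁻ x, ENNReal.ofReal (‖x‖ ^ p) ∂μ < ⊤

/-- `π` is a transference plan from `μ` to `ν`: its first and second marginals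
are `μ` and `ν` respectively. -/
def IsPlan (π : Measure (E × E)) (μ ν : Measure E) : Prop :=
  π.map Prod.fst = μ ∧ π.map Prod.snd = ν

/-- Transportation cost `∫ |x - y|^p dπ(x,y)` of a plan `π`. -/
def Wcost (p : ℝ) (π : Measure (E × E)) : ℝ≥0∞ :=
  ∫⁻ z, ENNReal.ofReal (dist z.1 z.2 ^ p) ∂π

/-- The Wasserstein distance `W_p(μ,ν) = (inf_π ∫ |x-y|^p dπ)^{1/p}`. -/
def Wp (p : ℝ) (μ ν : Measure E) : ℝ :=
  ((sInf (Wcost p '' {π | IsPlan π μ ν})) ^ (1 / p)).toReal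

/-- The set of admissible values `a|μ-μ̃| + a|ν-ν̃| + b W_p(μ̃,ν̃)` over all
`μ̃, ν̃ ∈ M^p` with `|μ̃| = |ν̃|`. -/
def gwSet (a b p : ℝ) (μ ν : Measure E) : Set ℝ :=
  { r | ∃ μ' ν' : Measure E, IsFiniteMeasure μ' ∧ IsFiniteMeasure ν' ∧
      FinMom p μ' ∧ FinMom p ν' ∧ μ' Set.univ = ν' Set.univ ∧
      r = a * tvDist μ μ' + a * tvDist ν ν' + b * Wp p μ' ν' }

/-- The generalized Wasserstein distance `W^{a,b}_p`. -/
def GW (a b p : ℝ) (μ ν : Measure E) : ℝ := sInf (gwSet a b p μ ν)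

/-- The support of a measure: the set of points all of whose open neighbourhoods
have positive measure. -/
def msupp (μ : Measure E) : Set E := {x : E | ∀ U : Set E, IsOpen U → x ∈ U → μ U ≠ 0}

/-- Weak convergence of a sequence of measures: convergence of integrals of all
bounded continuous functions. -/
def WeakConv {F : Type*} [MeasurableSpace F] [TopologicalSpace F]
    (μs : ℕ → Measure F) (μ : Measure F) : Prop :=
  ∀ f : F → ℝ, Continuous f → (∃ C : ℝ, ∀ x, |f x| ≤ C) →
    Tendsto (fun n => ∫ x, f x ∂(μs n)) atTop (𝓝 (∫ x, f x ∂μ))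

/-- A family of measures is tight if for every `ε > 0` there is a compact set
whose complement has measure less than `ε` for all members of the family. -/
def Tight (F : Set (Measure E)) : Prop :=
  ∀ ε : ℝ, 0 < ε → ∃ K : Set E, IsCompact K ∧ ∀ μ ∈ F, μ Kᶜ < ENNReal.ofReal ε

end

/-!
Take an admissible pair `(μ', ν')` and a transference plan `π` between them whose cost is
within `ε` of optimal. Cutting `π` down by densities (Radon–Nikodym with respect to its
marginals), first to a subplan whose first marginal is `μ' - (μ' - μ) ≤ μ`, then to one whose
second marginal lies below `ν`, costs at most `(μ' - μ)(ℝ^d) + (ν' - ν)(ℝ^d)` of mass. By the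
Jordan identity `(μ - μ')(ℝ^d) - (μ' - μ)(ℝ^d) = |μ| - |μ'|`, this loss is paid for by
the total variation terms, and the subplan costs no more than `π`; so its marginals are
submeasures of `μ` and `ν` with value at most the original one plus `ε`.
-/

namespace MeasureTheory.Measure

variable {α β γ : Type*} [MeasurableSpace α] [MeasurableSpace β] [MeasurableSpace γ]

lemma real_sub_univ_sub_real_sub_univ (μ ν : Measure α) [IsFiniteMeasure μ] [IsFiniteMeasure ν] :
    (μ - ν).real Set.univ - (ν - μ).real Set.univ = μ.real Set.univ - ν.real Set.univ := by
  have h := congrArg (fun s : SignedMeasure α => s Set.univ)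
    (sub_toSignedMeasure_eq_toSignedMeasure_sub (μ := μ) (ν := ν))
  simpa only [_root_.sub_apply, toSignedMeasure_apply_measurable MeasurableSet.univ]
    using h.symm

lemma exists_le_map_eq (π : Measure γ) [IsFiniteMeasure π] {g : γ → α} (hg : Measurable g)
    {τ : Measure α} (hτ : τ ≤ π.map g) : ∃ π' ≤ π, π'.map g = τ := by
  have : IsFiniteMeasure τ := isFiniteMeasure_of_le _ hτ
  set f := τ.rnDeriv (π.map g)
  have hf_le_one : ∀ᵐ x ∂π, f (g x) ≤ 1 :=
    (ae_map_iff hg.aemeasurable (measurableSet_le (measurable_rnDeriv _ _) measurable_const)).mp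
      (rnDeriv_le_one_of_le hτ)
  refine ⟨π.withDensity (f ∘ g), ?_, ?_⟩
  · calc π.withDensity (f ∘ g) ≤ π.withDensity 1 := withDensity_mono hf_le_one
      _ = π := withDensity_one
  · ext s hs
    rw [map_apply hg hs, withDensity_apply _ (hg hs),
      ← withDensity_rnDeriv_eq τ (π.map g) (absolutelyContinuous_of_le hτ),
      withDensity_apply _ hs, setLIntegral_map hs (measurable_rnDeriv _ _) hg]
    rfl

lemma exists_le_map_le (π : Measure γ) [IsFiniteMeasure π] {g : γ → α} (hg : Measurable g)
    (μ : Measure α) [IsFiniteMeasure μ] :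
    ∃ π' ≤ π, π'.map g ≤ μ ∧ π'.real Set.univ = π.real Set.univ - (π.map g - μ).real Set.univ := by
  obtain ⟨π', hπ'π, hπ'g⟩ := exists_le_map_eq π hg (sub_le (μ := π.map g) (ν := π.map g - μ))
  refine ⟨π', hπ'π, ?_, ?_⟩
  · rw [hπ'g, sub_le_iff_le_add, add_comm, ← sub_le_iff_le_add]
  · have hmass (κ : Measure γ) : κ.real Set.univ = (κ.map g).real Set.univ := by
      rw [map_measureReal_apply hg MeasurableSet.univ, Set.preimage_univ]
    rw [hmass, hmass π, hπ'g, measureReal_def, sub_apply MeasurableSet.univ sub_le,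
      ENNReal.toReal_sub_of_le (le_iff'.mp sub_le _) (measure_ne_top _ _)]
    rfl

lemma exists_le_map_fst_le_map_snd_le (π : Measure (α × β)) [IsFiniteMeasure π]
    (μ : Measure α) (ν : Measure β) [IsFiniteMeasure μ] [IsFiniteMeasure ν] :
    ∃ π' ≤ π, π'.map Prod.fst ≤ μ ∧ π'.map Prod.snd ≤ ν ∧
      π.real Set.univ - (π.map Prod.fst - μ).real Set.univ - (π.map Prod.snd - ν).real Set.univ
        ≤ π'.real Set.univ := by
  obtain ⟨π₁, hπ₁π, hπ₁μ, hπ₁mass⟩ := exists_le_map_le π measurable_fst μ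
  have : IsFiniteMeasure π₁ := isFiniteMeasure_of_le π hπ₁π
  obtain ⟨π₂, hπ₂π₁, hπ₂ν, hπ₂mass⟩ := exists_le_map_le π₁ measurable_snd ν
  have hexcess : (π₁.map Prod.snd - ν).real Set.univ ≤ (π.map Prod.snd - ν).real Set.univ := by
    have h : π.map Prod.snd ≤ (π.map Prod.snd - ν) + ν := sub_le_iff_le_add.mp le_rfl
    exact ENNReal.toReal_mono (measure_ne_top _ _)
      (le_iff'.mp (sub_le_of_le_add ((map_mono hπ₁π measurable_snd).trans h)) _)
  refine ⟨π₂, hπ₂π₁.trans hπ₁π, (map_mono hπ₂π₁ measurable_fst).trans hπ₁μ, hπ₂ν, ?_⟩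
  linarith

end MeasureTheory.Measure

section Plans

variable {α : Type*} [MeasurableSpace α]

lemma tvDist_nonneg (μ ν : Measure α) : 0 ≤ tvDist μ ν := ENNReal.toReal_nonneg

lemma tvDist_eq_real (μ ν : Measure α) [IsFiniteMeasure μ] [IsFiniteMeasure ν] :
    tvDist μ ν = (μ - ν).real Set.univ + (ν - μ).real Set.univ :=
  ENNReal.toReal_add (measure_ne_top _ _) (measure_ne_top _ _)

lemma tvDist_of_le {μ ν : Measure α} [IsFiniteMeasure μ] (h : ν ≤ μ) :
    tvDist μ ν = μ.real Set.univ - ν.real Set.univ := by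
  have : IsFiniteMeasure ν := isFiniteMeasure_of_le μ h
  rw [tvDist, Measure.sub_eq_zero_of_le h, Measure.coe_zero, Pi.zero_apply, add_zero,
    Measure.sub_apply MeasurableSet.univ h,
    ENNReal.toReal_sub_of_le (Measure.le_iff'.mp h _) (measure_ne_top _ _)]
  rfl

lemma IsPlan.measure_univ_fst {π : Measure (α × α)} {μ ν : Measure α} (hπ : IsPlan π μ ν) :
    π Set.univ = μ Set.univ := by
  rw [← hπ.1, Measure.map_apply measurable_fst MeasurableSet.univ, Set.preimage_univ]

lemma IsPlan.measure_univ_snd {π : Measure (α × α)} {μ ν : Measure α} (hπ : IsPlan π μ ν) :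
    π Set.univ = ν Set.univ := by
  rw [← hπ.2, Measure.map_apply measurable_snd MeasurableSet.univ, Set.preimage_univ]

lemma exists_isPlan {μ ν : Measure α} [IsFiniteMeasure μ] [IsFiniteMeasure ν]
    (h : μ Set.univ = ν Set.univ) : ∃ π, IsPlan π μ ν := by
  by_cases h0 : μ Set.univ = 0
  · rw [h0, eq_comm, Measure.measure_univ_eq_zero] at h
    rw [Measure.measure_univ_eq_zero] at h0
    exact ⟨0, by simp [h0], by simp [h]⟩
  · refine ⟨(μ Set.univ)⁻¹ • μ.prod ν, ?_, ?_⟩ <;>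
    rw [Measure.map_smul] <;>
    simp only [Measure.map_fst_prod, Measure.map_snd_prod, ← h, smul_smul,
      ENNReal.inv_mul_cancel h0 (measure_ne_top _ _), one_smul]

lemma exists_le_isPlan_tvDist_le {π : Measure (α × α)} [IsFiniteMeasure π] {μ' ν' : Measure α}
    (hπ : IsPlan π μ' ν') (μ ν : Measure α) [IsFiniteMeasure μ] [IsFiniteMeasure ν] :
    ∃ π' ≤ π, π'.map Prod.fst ≤ μ ∧ π'.map Prod.snd ≤ ν ∧
      tvDist μ (π'.map Prod.fst) + tvDist ν (π'.map Prod.snd) ≤ tvDist μ μ' + tvDist ν ν' := by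
  obtain ⟨π', hπ'π, hfst, hsnd, hmass⟩ := Measure.exists_le_map_fst_le_map_snd_le π μ ν
  have : IsFiniteMeasure π' := isFiniteMeasure_of_le π hπ'π
  refine ⟨π', hπ'π, hfst, hsnd, ?_⟩
  have hπ' : IsPlan π' (π'.map Prod.fst) (π'.map Prod.snd) := ⟨rfl, rfl⟩
  have : IsFiniteMeasure μ' := ⟨hπ.measure_univ_fst ▸ measure_lt_top π _⟩
  have : IsFiniteMeasure ν' := ⟨hπ.measure_univ_snd ▸ measure_lt_top π _⟩
  have hμ := Measure.real_sub_univ_sub_real_sub_univ μ μ'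
  have hν := Measure.real_sub_univ_sub_real_sub_univ ν ν'
  rw [hπ.1, hπ.2] at hmass
  rw [tvDist_of_le hfst, tvDist_of_le hsnd, tvDist_eq_real, tvDist_eq_real]
  simp only [measureReal_def, ← hπ'.measure_univ_fst, ← hπ'.measure_univ_snd,
    ← hπ.measure_univ_fst, ← hπ.measure_univ_snd] at hμ hν hmass ⊢
  linarith

end Plans

section Wasserstein

variable {E : Type*} [NormedAddCommGroup E] [MeasurableSpace E]

lemma Wp_nonneg (p : ℝ) (μ ν : Measure E) : 0 ≤ Wp p μ ν := ENNReal.toReal_nonneg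

lemma FinMom.mono {p : ℝ} {μ ν : Measure E} (hν : FinMom p ν) (h : μ ≤ ν) : FinMom p μ :=
  (lintegral_mono' h le_rfl).trans_lt hν

lemma sInf_Wcost_le {p : ℝ} {π : Measure (E × E)} {μ ν : Measure E} (hπ : IsPlan π μ ν) :
    sInf (Wcost p '' {π | IsPlan π μ ν}) ≤ Wcost p π :=
  sInf_le ⟨π, hπ, rfl⟩

lemma Wp_le_of_isPlan {p : ℝ} (hp : 0 ≤ p) {π : Measure (E × E)} {μ ν : Measure E} {C : ℝ≥0∞}
    (hπ : IsPlan π μ ν) (hC : Wcost p π ≤ C) (hC_top : C ≠ ⊤) : Wp p μ ν ≤ (C ^ (1 / p)).toReal :=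
  ENNReal.toReal_mono (ENNReal.rpow_ne_top_of_nonneg (by positivity) hC_top)
    (ENNReal.rpow_le_rpow ((sInf_Wcost_le hπ).trans hC) (by positivity))

variable [BorelSpace E]

lemma Wcost_lt_top {p : ℝ} (hp : 1 ≤ p) {π : Measure (E × E)} {μ ν : Measure E}
    (hπ : IsPlan π μ ν) (hμ : FinMom p μ) (hν : FinMom p ν) : Wcost p π < ⊤ := by
  have hp0 : 0 ≤ p := by linarith
  have hnorm (x : E) : ENNReal.ofReal (‖x‖ ^ p) = ‖x‖ₑ ^ p := by
    rw [← ENNReal.ofReal_rpow_of_nonneg (norm_nonneg x) hp0, ofReal_norm]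
  have hf : Measurable fun x : E => ‖x‖ₑ ^ p := by fun_prop
  simp only [FinMom, hnorm] at hμ hν
  calc Wcost p π ≤ ∫⁻ z, 2 ^ (p - 1) * (‖z.1‖ₑ ^ p + ‖z.2‖ₑ ^ p) ∂π := by
        refine lintegral_mono fun z => ?_
        rw [← ENNReal.ofReal_rpow_of_nonneg dist_nonneg hp0, ← edist_dist, edist_eq_enorm_sub]
        exact (ENNReal.rpow_le_rpow enorm_sub_le hp0).trans
          (ENNReal.rpow_add_le_mul_rpow_add_rpow _ _ hp)
    _ = 2 ^ (p - 1) * (∫⁻ x, ‖x‖ₑ ^ p ∂μ + ∫⁻ x, ‖x‖ₑ ^ p ∂ν) := by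
        rw [lintegral_const_mul _ (by fun_prop), lintegral_add_left (by fun_prop), ← hπ.1, ← hπ.2,
          lintegral_map hf measurable_fst, lintegral_map hf measurable_snd]
    _ < ⊤ := ENNReal.mul_lt_top (ENNReal.rpow_lt_top_of_nonneg (by linarith) (by simp))
        (ENNReal.add_lt_top.mpr ⟨hμ, hν⟩)

lemma exists_isPlan_Wcost_rpow_lt_Wp_add {p : ℝ} (hp : 1 ≤ p) {μ ν : Measure E}
    [IsFiniteMeasure μ] [IsFiniteMeasure ν] (hμ : FinMom p μ) (hν : FinMom p ν)
    (h : μ Set.univ = ν Set.univ) {ε : ℝ} (hε : 0 < ε) :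
    ∃ π, IsPlan π μ ν ∧ (Wcost p π ^ (1 / p)).toReal < Wp p μ ν + ε := by
  have hp0 : 0 < p := by linarith
  set c := sInf (Wcost p '' {π | IsPlan π μ ν})
  obtain ⟨π₀, hπ₀⟩ := exists_isPlan h
  have hc : c ≠ ⊤ := ((sInf_Wcost_le hπ₀).trans_lt (Wcost_lt_top hp hπ₀ hμ hν)).ne
  have hcp : c ^ (1 / p) ≠ ⊤ := ENNReal.rpow_ne_top_of_nonneg (by positivity) hc
  have hlt : c < (c ^ (1 / p) + ENNReal.ofReal ε) ^ p :=
    calc c = (c ^ (1 / p)) ^ p := by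
          rw [← ENNReal.rpow_mul, one_div_mul_cancel hp0.ne', ENNReal.rpow_one]
      _ < _ := ENNReal.rpow_lt_rpow (ENNReal.lt_add_right hcp (by simpa using hε)) hp0
  obtain ⟨_, ⟨π, hπ, rfl⟩, hπc⟩ := sInf_lt_iff.mp hlt
  refine ⟨π, hπ, ?_⟩
  have hπc' : Wcost p π ^ (1 / p) < c ^ (1 / p) + ENNReal.ofReal ε :=
    calc _ < ((c ^ (1 / p) + ENNReal.ofReal ε) ^ p) ^ (1 / p) :=
          ENNReal.rpow_lt_rpow hπc (by positivity)
      _ = _ := by rw [← ENNReal.rpow_mul, mul_one_div_cancel hp0.ne', ENNReal.rpow_one]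
  calc _ < (c ^ (1 / p) + ENNReal.ofReal ε).toReal :=
        ENNReal.toReal_strict_mono (ENNReal.add_ne_top.mpr ⟨hcp, ENNReal.ofReal_ne_top⟩) hπc'
    _ = Wp p μ ν + ε := by
        rw [ENNReal.toReal_add hcp ENNReal.ofReal_ne_top, ENNReal.toReal_ofReal hε.le]
        rfl

lemma exists_submeasures_le_add {a b p : ℝ} (hp : 1 ≤ p) (ha : 0 ≤ a) (hb : 0 < b)
    (μ ν : Measure E) [IsFiniteMeasure μ] [IsFiniteMeasure ν] {μ' ν' : Measure E}
    [IsFiniteMeasure μ'] [IsFiniteMeasure ν'] (hμ' : FinMom p μ') (hν' : FinMom p ν')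
    (hmass : μ' Set.univ = ν' Set.univ) {ε : ℝ} (hε : 0 < ε) :
    ∃ μ'' ν'' : Measure E, IsFiniteMeasure μ'' ∧ IsFiniteMeasure ν'' ∧
      FinMom p μ'' ∧ FinMom p ν'' ∧ μ'' Set.univ = ν'' Set.univ ∧ μ'' ≤ μ ∧ ν'' ≤ ν ∧
      a * tvDist μ μ'' + a * tvDist ν ν'' + b * Wp p μ'' ν''
        ≤ a * tvDist μ μ' + a * tvDist ν ν' + b * Wp p μ' ν' + ε := by
  obtain ⟨π, hπ, hπWp⟩ := exists_isPlan_Wcost_rpow_lt_Wp_add hp hμ' hν' hmass (div_pos hε hb)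
  have : IsFiniteMeasure π := ⟨hπ.measure_univ_fst ▸ measure_lt_top μ' _⟩
  obtain ⟨π', hπ'π, hfst, hsnd, htv⟩ := exists_le_isPlan_tvDist_le hπ μ ν
  have hπ' : IsPlan π' (π'.map Prod.fst) (π'.map Prod.snd) := ⟨rfl, rfl⟩
  have hWp : Wp p (π'.map Prod.fst) (π'.map Prod.snd) ≤ Wp p μ' ν' + ε / b :=
    (Wp_le_of_isPlan (by linarith) hπ' (lintegral_mono' hπ'π le_rfl)
      (Wcost_lt_top hp hπ hμ' hν').ne).trans hπWp.le
  have : IsFiniteMeasure π' := isFiniteMeasure_of_le π hπ'π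
  refine ⟨_, _, inferInstance, inferInstance,
    hμ'.mono (hπ.1 ▸ Measure.map_mono hπ'π measurable_fst),
    hν'.mono (hπ.2 ▸ Measure.map_mono hπ'π measurable_snd),
    hπ'.measure_univ_fst.symm.trans hπ'.measure_univ_snd, hfst, hsnd, ?_⟩
  calc _ ≤ a * (tvDist μ μ' + tvDist ν ν') + b * (Wp p μ' ν' + ε / b) := by
        rw [← mul_add]
        gcongr
    _ = _ := by field_simp; ring

end Wasserstein

lemma csInf_eq_csInf_of_subset_of_forall_exists_le_add {S T : Set ℝ} (hST : S ⊆ T)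
    (hS : S.Nonempty) (hT : BddBelow T) (h : ∀ t ∈ T, ∀ ε > 0, ∃ s ∈ S, s ≤ t + ε) :
    sInf S = sInf T :=
  le_antisymm
    (le_csInf (hS.mono hST) fun t ht => le_of_forall_pos_le_add fun ε hε =>
      let ⟨_, hs, hst⟩ := h t ht ε hε
      (csInf_le (hT.mono hST) hs).trans hst)
    (csInf_le_csInf hT hS hST)

lemma gwSet_bddBelow {E : Type*} [NormedAddCommGroup E] [MeasurableSpace E] {a b : ℝ}
    (ha : 0 ≤ a) (hb : 0 ≤ b) (p : ℝ) (μ ν : Measure E) : BddBelow (gwSet a b p μ ν) := by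
  refine ⟨0, ?_⟩
  rintro _ ⟨μ', ν', -, -, -, -, -, rfl⟩
  have := tvDist_nonneg μ μ'
  have := tvDist_nonneg ν ν'
  have := Wp_nonneg p μ' ν'
  positivity

theorem gw_inf_restricted_to_submeasures_general {d : ℕ} (a b p : ℝ) (hp : 1 ≤ p) (ha : 0 < a) (hb : 0 < b)
    (μ ν : Measure (Euc d)) [IsFiniteMeasure μ] [IsFiniteMeasure ν] :
    GW a b p μ ν = sInf { r : ℝ | ∃ μ' ν' : Measure (Euc d),
      IsFiniteMeasure μ' ∧ IsFiniteMeasure ν' ∧ FinMom p μ' ∧ FinMom p ν' ∧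
      μ' Set.univ = ν' Set.univ ∧ μ' ≤ μ ∧ ν' ≤ ν ∧
      r = a * tvDist μ μ' + a * tvDist ν ν' + b * Wp p μ' ν' } := by
  refine (csInf_eq_csInf_of_subset_of_forall_exists_le_add ?_ ?_
    (gwSet_bddBelow ha.le hb.le p μ ν) ?_).symm
  · rintro _ ⟨μ', ν', hμ'fin, hν'fin, hμ', hν', hmass, -, -, rfl⟩
    exact ⟨μ', ν', hμ'fin, hν'fin, hμ', hν', hmass, rfl⟩
  · exact ⟨_, 0, 0, inferInstance, inferInstance, by simp [FinMom], by simp [FinMom], rfl,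
      Measure.zero_le μ, Measure.zero_le ν, rfl⟩
  · rintro _ ⟨μ', ν', _, _, hμ', hν', hmass, rfl⟩ ε hε
    obtain ⟨μ'', ν'', hμ''fin, hν''fin, hμ'', hν'', hmass', hμ''μ, hν''ν, hle⟩ :=
      exists_submeasures_le_add hp ha.le hb μ ν hμ' hν' hmass hε
    exact ⟨_, ⟨μ'', ν'', hμ''fin, hν''fin, hμ'', hν'', hmass', hμ''μ, hν''ν, rfl⟩, hle⟩

theorem gw_inf_restricted_to_submeasures {d : ℕ} (hd : 1 ≤ d) (a b p : ℝ) (hp : 1 ≤ p) (ha : 0 < a) (hb : 0 < b)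
    (μ ν : Measure (Euc d)) [IsFiniteMeasure μ] [IsFiniteMeasure ν] :
    GW a b p μ ν = sInf { r : ℝ | ∃ μ' ν' : Measure (Euc d),
      IsFiniteMeasure μ' ∧ IsFiniteMeasure ν' ∧ FinMom p μ' ∧ FinMom p ν' ∧
      μ' Set.univ = ν' Set.univ ∧ μ' ≤ μ ∧ ν' ≤ ν ∧
      r = a * tvDist μ μ' + a * tvDist ν ν' + b * Wp p μ' ν' } :=
  gw_inf_restricted_to_submeasures_general a b p hp ha hb μ ν
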